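/- arXiv:2503.11842 — 3 statements merged into one kernel-verified Lean document; each statement's English description precedes it below -/
import Mathlib

section
/- Let n, d, k be positive real numbers. Then 1 − k/(k+d) > d/(n+d) − (k/(k+d))·(d/(n+d))³ holds if and only if k < (n+d)²/(n+2d); equivalently, writing α = n/d and γ = k/d, the inequality holds if and only if γ < (α+1)²/(α+2). (This characterizes exactly when the post-test-time-training loss starting from the pre-trained initialization, (d/(n+d) − (k/(k+d))(d/(n+d))³)·‖β‖², is smaller than the post-test-time-training loss starting from the zero initialization, (1 − k/(k+d))·‖β‖².) -/
/-!
Over the common denominator `(k + d)(n + d)³` the gap between the two losses is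
`d n ((n + d)² - k (n + 2d))`, so with `n, d > 0` its sign is that of `(n + d)² - k (n + 2d)`.
The normalised form follows by dividing numerator and denominator of `(n + d)² / (n + 2d)` by `d`.
-/

theorem zero_init_loss_sub_pretrained_loss {n d k : ℝ} (hnd : n + d ≠ 0) (hkd : k + d ≠ 0) :
    (1 - k / (k + d)) - (d / (n + d) - k / (k + d) * (d / (n + d)) ^ 3)
      = d * n * ((n + d) ^ 2 - k * (n + 2 * d)) / ((k + d) * (n + d) ^ 3) := by
  field_simp
  ring

theorem pretrained_loss_lt_zero_init_loss_iff {n d k : ℝ} (hn : 0 < n) (hd : 0 < d) (hkd : 0 < k + d) :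
    d / (n + d) - k / (k + d) * (d / (n + d)) ^ 3 < 1 - k / (k + d) ↔
      k * (n + 2 * d) < (n + d) ^ 2 := by
  have hnd : 0 < n + d := by linarith
  rw [← sub_pos, zero_init_loss_sub_pretrained_loss hnd.ne' hkd.ne',
    div_pos_iff_of_pos_right (by positivity), mul_pos_iff_of_pos_left (by positivity), sub_pos]

theorem div_add_one_sq_div_div_add_two {n d : ℝ} (hd : d ≠ 0) :
    (n / d + 1) ^ 2 / (n / d + 2) = (n + d) ^ 2 / (n + 2 * d) / d := by
  field_simp

/-- phase transition between pre-trained and zero initialization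
(isotropic, noiseless setting). -/
theorem stmt11 (n d k : ℝ) (hn : 0 < n) (hd : 0 < d) (hk : 0 < k) :
    ((1 - k / (k + d) > d / (n + d) - (k / (k + d)) * (d / (n + d)) ^ 3) ↔
        k < (n + d) ^ 2 / (n + 2 * d)) ∧
    ((1 - k / (k + d) > d / (n + d) - (k / (k + d)) * (d / (n + d)) ^ 3) ↔
        k / d < (n / d + 1) ^ 2 / (n / d + 2)) := by
  have hcrit : 1 - k / (k + d) > d / (n + d) - k / (k + d) * (d / (n + d)) ^ 3 ↔
      k < (n + d) ^ 2 / (n + 2 * d) := by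
    rw [gt_iff_lt, pretrained_loss_lt_zero_init_loss_iff hn hd (by linarith), lt_div_iff₀ (by linarith)]
  refine ⟨hcrit, ?_⟩
  rw [hcrit, div_add_one_sq_div_div_add_two hd.ne', div_lt_div_iff_of_pos_right hd]
end

section
/- Let d, n ≥ 1 and β ∈ ℝᵈ with β ≠ 0. Define F : ℝ^{d×d} → ℝ by F(W) = βᵀ(I − nW − nWᵀ + n(n+1)·WᵀW)β + n·tr(WᵀW)·‖β‖². Then F has the unique global minimizer W_opt = β βᵀ / ((n+2)‖β‖²), and F(W_opt) = 2‖β‖²/(n+2). -/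
open Matrix

/-- the test population loss
`F(W) = βᵀ(I − nW − nWᵀ + n(n+1) WᵀW)β + n tr(WᵀW) ‖β‖²` (noiseless, identity feature
covariance) has unique global minimizer `W_opt = ββᵀ/((n+2)‖β‖²)`, with
`F(W_opt) = 2‖β‖²/(n+2)`. -/
theorem stmt13 {d n : ℕ} (hd : 1 ≤ d) (hn : 1 ≤ n) (β : Fin d → ℝ) (hβ : β ≠ 0)
    (F : Matrix (Fin d) (Fin d) ℝ → ℝ)
    (hF : F = fun W =>
      β ⬝ᵥ ((1 - (n : ℝ) • W - (n : ℝ) • Wᵀ + ((n : ℝ) * ((n : ℝ) + 1)) • (Wᵀ * W)) *ᵥ β)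
        + (n : ℝ) * (Wᵀ * W).trace * (∑ i, β i ^ 2))
    (Wopt : Matrix (Fin d) (Fin d) ℝ)
    (hWopt : Wopt = (((n : ℝ) + 2) * (∑ i, β i ^ 2))⁻¹ • Matrix.vecMulVec β β) :
    (∀ W : Matrix (Fin d) (Fin d) ℝ, W ≠ Wopt → F Wopt < F W) ∧
    F Wopt = 2 * (∑ i, β i ^ 2) / ((n : ℝ) + 2) := by
  set b := ∑ i, β i ^ 2 with hbdef
  have hb : 0 < b := by
    obtain ⟨i, hi⟩ : ∃ i, β i ≠ 0 := by
      by_contra h; push_neg at h; exact hβ (funext h)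
    exact Finset.sum_pos' (fun j _ => sq_nonneg _) ⟨i, Finset.mem_univ i, by positivity⟩
  have hN1 : (1:ℝ) ≤ (n:ℝ) := by exact_mod_cast hn
  have hN0 : (0:ℝ) < (n:ℝ) := by linarith
  have hn2 : ((n:ℝ) + 2) ≠ 0 := by linarith
  set c : ℝ := (((n:ℝ) + 2) * b)⁻¹ with hcdef
  -- sum form of F
  have hFsum : ∀ W : Matrix (Fin d) (Fin d) ℝ,
      F W = b + ∑ i, (-2*(n:ℝ)*β i*(∑ j, W i j * β j)
        + (n:ℝ)*((n:ℝ)+1)*(∑ j, W i j * β j)^2 + (n:ℝ)*b*∑ j, (W i j)^2) := by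
    intro W
    have h1 : β ⬝ᵥ β = b := by
      simp [dotProduct, hbdef, sq]
    have h2 : β ⬝ᵥ (W *ᵥ β) = ∑ i, β i * ∑ j, W i j * β j := by
      simp [dotProduct, mulVec]
    have h3 : β ⬝ᵥ (Wᵀ *ᵥ β) = ∑ i, β i * ∑ j, W i j * β j := by
      simp only [dotProduct, mulVec, transpose_apply, Finset.mul_sum]
      rw [Finset.sum_comm]
      exact Finset.sum_congr rfl fun i _ => Finset.sum_congr rfl fun j _ => by ring
    have h4 : β ⬝ᵥ ((Wᵀ * W) *ᵥ β) = ∑ i, (∑ j, W i j * β j)^2 := by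
      rw [← Matrix.mulVec_mulVec, Matrix.dotProduct_mulVec, Matrix.vecMul_transpose]
      simp only [dotProduct, mulVec]
      exact Finset.sum_congr rfl fun i _ => (sq _).symm
    have h5 : (Wᵀ * W).trace = ∑ i, ∑ j, (W i j)^2 := by
      simp only [trace, diag, Matrix.mul_apply, transpose_apply]
      rw [Finset.sum_comm]
      exact Finset.sum_congr rfl fun i _ => Finset.sum_congr rfl fun j _ => (sq _).symm
    rw [hF]
    simp only [Matrix.sub_mulVec, Matrix.add_mulVec, Matrix.smul_mulVec,
      Matrix.one_mulVec, dotProduct_add, dotProduct_sub, dotProduct_smul, smul_eq_mul]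
    rw [h1, h2, h3, h4, h5]
    rw [Finset.sum_add_distrib, Finset.sum_add_distrib, ← Finset.mul_sum, ← Finset.mul_sum]
    rw [show ∑ i, -2*(n:ℝ)*β i*(∑ j, W i j * β j)
        = -2*(n:ℝ)*∑ i, β i * ∑ j, W i j * β j by
      rw [Finset.mul_sum]; exact Finset.sum_congr rfl fun i _ => by ring]
    ring
  -- row-wise square completion
  have rowkey : ∀ (a : ℝ) (w : Fin d → ℝ),
      -2*(n:ℝ)*a*(∑ j, w j * β j) + (n:ℝ)*((n:ℝ)+1)*(∑ j, w j * β j)^2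
        + (n:ℝ)*b*∑ j, (w j)^2
      = -((n:ℝ)*a^2/((n:ℝ)+2)) + (n:ℝ)*((n:ℝ)+1)*((∑ j, w j * β j) - a/((n:ℝ)+2))^2
        + (n:ℝ)*b*∑ j, (w j - c*a*β j)^2 := by
    intro a w
    have e1 : ∑ j, (w j - c*a*β j)^2
        = (∑ j, (w j)^2) - 2*c*a*(∑ j, w j * β j) + c^2*a^2*b := by
      have : ∀ j ∈ Finset.univ, (w j - c*a*β j)^2
          = (w j)^2 - 2*c*a*(w j * β j) + c^2*a^2*(β j ^2) := fun j _ => by ring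
      rw [Finset.sum_congr rfl this, Finset.sum_add_distrib, Finset.sum_sub_distrib,
        ← Finset.mul_sum, ← Finset.mul_sum, hbdef]
    rw [e1, hcdef]
    field_simp
    ring
  -- key decomposition
  have hkey : ∀ W : Matrix (Fin d) (Fin d) ℝ,
      F W = 2*b/((n:ℝ)+2)
      + ∑ i, ((n:ℝ)*((n:ℝ)+1)*((∑ j, W i j * β j) - β i/((n:ℝ)+2))^2
        + (n:ℝ)*b*∑ j, (W i j - c*β i*β j)^2) := by
    intro W
    rw [hFsum W]
    rw [Finset.sum_congr rfl (fun i _ => rowkey (β i) (W i))]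
    rw [Finset.sum_add_distrib, Finset.sum_add_distrib]
    rw [show ∑ i, -((n:ℝ)*(β i)^2/((n:ℝ)+2)) = -((n:ℝ)*b/((n:ℝ)+2)) by
      rw [hbdef, Finset.mul_sum, Finset.sum_div, ← Finset.sum_neg_distrib]]
    rw [Finset.sum_add_distrib]
    field_simp
    ring
  have hWopt_entry : ∀ i j, Wopt i j = c * β i * β j := by
    intro i j
    rw [hWopt]
    simp [vecMulVec_apply, hcdef]
    ring
  have hcb : c * b = ((n:ℝ)+2)⁻¹ := by
    rw [hcdef]; field_simp
  have hsopt : ∀ i, (∑ j, Wopt i j * β j) = β i / ((n:ℝ)+2) := by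
    intro i
    have : ∀ j ∈ Finset.univ, Wopt i j * β j = c * β i * (β j ^2) := fun j _ => by
      rw [hWopt_entry]; ring
    rw [Finset.sum_congr rfl this, ← Finset.mul_sum, ← hbdef]
    rw [show c * β i * b = β i * (c * b) by ring, hcb]
    rw [div_eq_mul_inv]
  have hFopt : F Wopt = 2*b/((n:ℝ)+2) := by
    rw [hkey Wopt]
    have : ∀ i ∈ Finset.univ,
        ((n:ℝ)*((n:ℝ)+1)*((∑ j, Wopt i j * β j) - β i/((n:ℝ)+2))^2
          + (n:ℝ)*b*∑ j, (Wopt i j - c*β i*β j)^2) = 0 := by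
      intro i _
      rw [hsopt i]
      have : ∀ j ∈ Finset.univ, (Wopt i j - c*β i*β j)^2 = 0 := fun j _ => by
        rw [hWopt_entry]; ring
      rw [Finset.sum_congr rfl this]
      simp
    rw [Finset.sum_congr rfl this]
    simp
  refine ⟨?_, by rw [hFopt]⟩
  intro W hW
  rw [hFopt, hkey W]
  have hpos : 0 < ∑ i, ((n:ℝ)*((n:ℝ)+1)*((∑ j, W i j * β j) - β i/((n:ℝ)+2))^2
      + (n:ℝ)*b*∑ j, (W i j - c*β i*β j)^2) := by
    obtain ⟨i0, j0, hij⟩ : ∃ i j, W i j ≠ Wopt i j := by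
      by_contra h; push_neg at h
      exact hW (by ext i j; exact h i j)
    have hterm : ∀ i, 0 ≤ (n:ℝ)*((n:ℝ)+1)*((∑ j, W i j * β j) - β i/((n:ℝ)+2))^2
        + (n:ℝ)*b*∑ j, (W i j - c*β i*β j)^2 := by
      intro i
      have h1 : 0 ≤ ∑ j, (W i j - c*β i*β j)^2 :=
        Finset.sum_nonneg fun j _ => sq_nonneg _
      positivity
    apply Finset.sum_pos' (fun i _ => hterm i)
    refine ⟨i0, Finset.mem_univ i0, ?_⟩
    have h2 : 0 < ∑ j, (W i0 j - c*β i0*β j)^2 := by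
      apply Finset.sum_pos' (fun j _ => sq_nonneg _)
      refine ⟨j0, Finset.mem_univ j0, ?_⟩
      have : W i0 j0 - c*β i0*β j0 ≠ 0 := by
        rw [← hWopt_entry]; exact sub_ne_zero.mpr hij
      positivity
    have h3 : 0 ≤ (n:ℝ)*((n:ℝ)+1)*((∑ j, W i0 j * β j) - β i0/((n:ℝ)+2))^2 := by
      positivity
    have h4 : 0 < (n:ℝ)*b*∑ j, (W i0 j - c*β i0*β j)^2 := mul_pos (mul_pos hN0 hb) h2
    linarith
  linarith
end

section
/- Let c₁ ≥ 0 and c₂ > 0 with c₁ + c₂ < 1, let k, d be positive real numbers, and set β = k/(k+d). Then c₁ + c₂ − β·c₁²/(c₁+c₂) < 1 − β holds if and only if k/d < (c₁ + c₂ − (c₁+c₂)²) / (c₂·(2c₁ + c₂)). -/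
/-!
With `s = c1 + c2` and `β = k / (k + d)`, the difference of the two losses is
`(1 - β) / s * (β / (1 - β) * (s ^ 2 - c1 ^ 2) - s * (1 - s))`.
Since `β / (1 - β) = k / d` and `s ^ 2 - c1 ^ 2 = c2 * (2 * c1 + c2)`, its sign is that of
`k / d * c2 * (2 * c1 + c2) - s * (1 - s)`.
-/

theorem sub_mul_sq_div_lt_one_sub_iff {s a β : ℝ} (hs : 0 < s) (hβ : β < 1) :
    s - β * a ^ 2 / s < 1 - β ↔ β / (1 - β) * (s ^ 2 - a ^ 2) < s - s ^ 2 := by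
  have hβ' : 0 < 1 - β := by linarith
  have key : s - β * a ^ 2 / s - (1 - β) =
      (1 - β) / s * (β / (1 - β) * (s ^ 2 - a ^ 2) - (s - s ^ 2)) := by
    field_simp
    ring
  rw [← sub_neg, key, ← mul_zero ((1 - β) / s), mul_lt_mul_iff_right₀ (by positivity), sub_neg]

theorem div_add_div_one_sub_div_add_eq_div {k d : ℝ} (hkd : k + d ≠ 0) :
    k / (k + d) / (1 - k / (k + d)) = k / d := by
  rw [one_sub_div hkd, add_sub_cancel_left, div_div_div_cancel_right₀ hkd]

theorem stmt19_general (c1 c2 : ℝ) (hc1 : 0 ≤ c1) (hc2 : 0 < c2)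
    (k d : ℝ) (hk : 0 < k) (hd : 0 < d) (b : ℝ) (hb : b = k / (k + d)) :
    (c1 + c2 - b * c1 ^ 2 / (c1 + c2) < 1 - b) ↔
      k / d < (c1 + c2 - (c1 + c2) ^ 2) / (c2 * (2 * c1 + c2)) := by
  subst hb
  have hkd : 0 < k + d := by positivity
  have hb1 : k / (k + d) < 1 := (div_lt_one hkd).2 (by linarith)
  have hden : 0 < c2 * (2 * c1 + c2) := by positivity
  rw [sub_mul_sq_div_lt_one_sub_iff (by positivity) hb1, div_add_div_one_sub_div_add_eq_div hkd.ne',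
    lt_div_iff₀ hden, show (c1 + c2) ^ 2 - c1 ^ 2 = c2 * (2 * c1 + c2) by ring]

/-- phase transition between pre-trained and zero initialization
(general task covariance setting). -/
theorem stmt19 (c1 c2 : ℝ) (hc1 : 0 ≤ c1) (hc2 : 0 < c2) (hsum : c1 + c2 < 1)
    (k d : ℝ) (hk : 0 < k) (hd : 0 < d) (b : ℝ) (hb : b = k / (k + d)) :
    (c1 + c2 - b * c1 ^ 2 / (c1 + c2) < 1 - b) ↔
      k / d < (c1 + c2 - (c1 + c2) ^ 2) / (c2 * (2 * c1 + c2)) :=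
  stmt19_general c1 c2 hc1 hc2 k d hk hd b hb
end
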